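/- arXiv:1210.2995 — 2 statements merged into one kernel-verified Lean document; each statement's English description precedes it below -/
import Mathlib

section
/- The higher topology makes K((t)) into a locally convex topological K-vector space: every set of the form Λ = Σ_{i∈ℤ} 𝔭^{n_i} t^i, where (n_i)_{i∈ℤ} ⊂ ℤ ∪ {-∞} satisfies n_i = -∞ for all sufficiently large i, is an 𝒪-lattice in K((t)), and these sets form a basis of neighbourhoods of zero for the higher topology. -/
/-!
Common setting: `K` is a characteristic-zero local field (a finite extension of `ℚ_p`)
with ring of integers `𝒪 = {c : K | ‖c‖ ≤ 1}`, maximal ideal `𝔭 = {c : K | ‖c‖ < 1}`,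
residue field of cardinality `q` and the absolute value normalised by `‖π‖ = q⁻¹`.
We formalise the two-dimensional local fields `K((t))` (as `LaurentSeries K`) and
`K{{t}}` (as the submodule `mixedCarrier K` of `ℤ → K`), their higher topologies, and
the relevant functional-analytic notions (lattices, seminorms, boundedness,
c-compactness, compactoidness, completeness for nets, duality).
-/

open Filter Topology Set Pointwise
open scoped Classical

noncomputable section

namespace TwoDimLF

variable (K : Type) [NontriviallyNormedField K]

/-- `K` is a characteristic-zero nonarchimedean local field: the norm is nonarchimedean,
takes the values `q^ℤ` on `K˟` (with a uniformizer of norm `q⁻¹`), `K` is complete, locally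
compact, of characteristic zero, and the residue field has exactly `q` elements. -/
structure IsCharZeroLocalField (q : ℕ) : Prop where
  nonarch : ∀ x y : K, ‖x + y‖ ≤ max ‖x‖ ‖y‖
  one_lt_q : 1 < q
  norm_values : ∀ x : K, x ≠ 0 → ∃ n : ℤ, ‖x‖ = (q : ℝ) ^ (-n)
  exists_uniformizer : ∃ π : K, ‖π‖ = ((q : ℝ))⁻¹
  charZero : CharZero K
  locallyCompact : LocallyCompactSpace K
  complete : CompleteSpace K
  residue_card : ∃ s : Finset K, s.card = q ∧
    ∀ x : K, ‖x‖ ≤ 1 → ∃! y, y ∈ s ∧ ‖x - y‖ < 1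

/-- The fractional ideal `𝔭^n ⊆ K` for `n ∈ ℤ ∪ {-∞}`, with the convention `𝔭^(-∞) = K`. -/
def pB (q : ℕ) (n : WithBot ℤ) : Set K :=
  WithBot.recBotCoe Set.univ (fun m : ℤ => {x : K | ‖x‖ ≤ (q : ℝ) ^ (-m)}) n

/-- The fractional ideal `𝔭^n ⊆ K` for `n ∈ ℤ ∪ {∞}`, with the convention `𝔭^∞ = {0}`. -/
def pT (q : ℕ) (n : WithTop ℤ) : Set K :=
  WithTop.recTopCoe {0} (fun m : ℤ => {x : K | ‖x‖ ≤ (q : ℝ) ^ (-m)}) n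

/-- The fractional ideal `𝔭^n ⊆ K` for `n ∈ ℤ ∪ {±∞}`. -/
def pE (q : ℕ) (n : WithBot (WithTop ℤ)) : Set K :=
  WithBot.recBotCoe Set.univ (fun m : WithTop ℤ => pT K q m) n

/-- `q ^ n ∈ ℝ` for `n ∈ ℤ ∪ {-∞}`, with the convention `q^(-∞) = 0`. -/
def qpow (q : ℕ) (n : WithBot ℤ) : ℝ :=
  WithBot.recBotCoe 0 (fun m : ℤ => (q : ℝ) ^ m) n

/-- `1 - k` for `k ∈ ℤ ∪ {±∞}` (so `1 - (±∞) = ∓∞`). -/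
def oneSubE : WithBot (WithTop ℤ) → WithBot (WithTop ℤ) :=
  WithBot.recBotCoe ((⊤ : WithTop ℤ) : WithBot (WithTop ℤ))
    (WithTop.recTopCoe (⊥ : WithBot (WithTop ℤ))
      (fun z : ℤ => (((1 - z : ℤ) : WithTop ℤ) : WithBot (WithTop ℤ))))

section LCS

variable {V : Type} [AddCommGroup V] [Module K V]

/-- `S` is an `𝒪`-submodule of the `K`-vector space `V`, where `𝒪 = {c : K | ‖c‖ ≤ 1}`
is the ring of integers of `K`. -/
def IsOSubmodule (S : Set V) : Prop :=
  (0 : V) ∈ S ∧ (∀ x ∈ S, ∀ y ∈ S, x + y ∈ S) ∧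
    ∀ c : K, ‖c‖ ≤ 1 → ∀ x ∈ S, c • x ∈ S

/-- `S` is an `𝒪`-lattice in `V`: an `𝒪`-submodule such that every vector is carried
into `S` by some nonzero scalar. -/
def IsLatticeSet (S : Set V) : Prop :=
  IsOSubmodule K S ∧ ∀ v : V, ∃ a : K, a ≠ 0 ∧ a • v ∈ S

/-- A (nonarchimedean) seminorm on the `K`-vector space `V`. -/
def IsSeminorm (N : V → ℝ) : Prop :=
  (∀ (c : K) (v : V), N (c • v) = ‖c‖ * N v) ∧ ∀ v w : V, N (v + w) ≤ max (N v) (N w)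

/-- The gauge seminorm of a lattice `Λ ⊆ V`: `‖v‖_Λ = inf {‖a‖ : v ∈ aΛ}`. -/
def gaugeSeminorm (Λ : Set V) (v : V) : ℝ :=
  sInf {r : ℝ | ∃ a : K, v ∈ a • Λ ∧ r = ‖a‖}

/-- The group topology on `W` determined by a family `B` of neighbourhoods of zero:
neighbourhoods of `x` are generated by the translates `x + U`, `U ∈ B`. -/
def addTopologyOf {W : Type} [AddCommGroup W] (B : Set (Set W)) : TopologicalSpace W :=
  TopologicalSpace.mkOfNhds fun x => Filter.map (fun v => x + v) (⨅ U ∈ B, Filter.principal U)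

/-- `B` is (Von-Neumann) bounded for the locally convex topology `τ`: every open lattice
absorbs it. -/
def IsVNBounded (τ : TopologicalSpace V) (B : Set V) : Prop :=
  ∀ Λ : Set V, IsLatticeSet K Λ → IsOpen[τ] Λ → ∃ a : K, B ⊆ a • Λ

/-- The `𝒪`-submodule `A ⊆ V` is c-compact: for every decreasing filtered family of open
lattices `L i`, the canonical map `A → lim A/(L i ∩ A)` is surjective (phrased via
compatible families of representatives). -/
def IsCCompact (τ : TopologicalSpace V) (A : Set V) : Prop :=
  ∀ (ι : Type) (L : ι → Set V),
    (∀ i, IsLatticeSet K (L i) ∧ IsOpen[τ] (L i)) →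
    (∀ i j, ∃ k, L k ⊆ L i ∧ L k ⊆ L j) →
    ∀ x : ι → V, (∀ i, x i ∈ A) →
      (∀ i j, L j ⊆ L i → x j - x i ∈ L i) →
      ∃ a ∈ A, ∀ i, a - x i ∈ L i

/-- The `𝒪`-submodule `A ⊆ V` is compactoid: for every open lattice `Λ` there are finitely
many vectors `v₁, …, v_m ∈ V` with `A ⊆ Λ + 𝒪v₁ + ⋯ + 𝒪v_m`. -/
def IsCompactoid (τ : TopologicalSpace V) (A : Set V) : Prop :=
  ∀ Λ : Set V, IsLatticeSet K Λ → IsOpen[τ] Λ →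
    ∃ (m : ℕ) (v : Fin m → V),
      A ⊆ {u : V | ∃ l ∈ Λ, ∃ c : Fin m → K, (∀ j, ‖c j‖ ≤ 1) ∧ u = l + ∑ j, c j • v j}

/-- `A ⊆ V` is complete: every Cauchy net with values in `A` converges to a point of `A`
(for the topology `τ`). -/
def IsNetComplete (τ : TopologicalSpace V) (A : Set V) : Prop :=
  ∀ (ι : Type) [Preorder ι] [Nonempty ι],
    (∀ i j : ι, ∃ k, i ≤ k ∧ j ≤ k) →
    ∀ x : ι → V, (∀ i, x i ∈ A) →
      (∀ U ∈ @nhds V τ 0, ∃ i0, ∀ j ≥ i0, ∀ k ≥ i0, x j - x k ∈ U) →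
      ∃ a ∈ A, Filter.Tendsto x Filter.atTop (@nhds V τ a)

/-- `τ` makes `V` a locally convex topological `K`-vector space: it is a vector-space
topology whose filter of neighbourhoods of zero admits a basis of lattices. -/
def IsLCTVS (τ : TopologicalSpace V) : Prop :=
  @IsTopologicalAddGroup V τ _ ∧ @ContinuousSMul K V _ _ τ ∧
    ∀ S ∈ @nhds V τ 0, ∃ Λ : Set V, IsLatticeSet K Λ ∧ Λ ∈ @nhds V τ 0 ∧ Λ ⊆ S

/-- The topological dual of `(V, τ)`: continuous `K`-linear forms, as a set of functions. -/
def dualSet (τ : TopologicalSpace V) : Set (V → K) :=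
  {l | IsLinearMap K l ∧ @Continuous V K τ _ l}

/-- Basic neighbourhoods of zero for the `c`-topology on `V → K`: uniform convergence on
compactoid `𝒪`-submodules. -/
def cTopBasic (τ : TopologicalSpace V) : Set (Set (V → K)) :=
  {S | ∃ (B : Set V) (ε : ℝ), IsOSubmodule K B ∧ IsCompactoid K τ B ∧ 0 < ε ∧
    S = {l : V → K | ∀ x ∈ B, ‖l x‖ ≤ ε}}

/-- The `c`-topology (uniform convergence on compactoid `𝒪`-submodules) on `V → K`. -/
def cTop (τ : TopologicalSpace V) : TopologicalSpace (V → K) :=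
  addTopologyOf (cTopBasic K τ)

/-- The pseudo-polar `A^p = {l ∈ V' : |l(v)| < 1 for all v ∈ A}`. -/
def pseudoPolar (τ : TopologicalSpace V) (A : Set V) : Set (V → K) :=
  {l | l ∈ dualSet K τ ∧ ∀ v ∈ A, ‖l v‖ < 1}

/-- The pseudo-bipolar `A^{pp} = {v ∈ V : |l(v)| < 1 for all l ∈ A^p}`. -/
def pseudoBipolar (τ : TopologicalSpace V) (A : Set V) : Set V :=
  {v | ∀ l ∈ pseudoPolar K τ A, ‖l v‖ < 1}

end LCS

/-! ### The equal characteristic field `K((t))` -/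

/-- Basic neighbourhoods of zero for the higher topology on `K((t))`:
`Σ U_i t^i` where each `U_i` is an open neighbourhood of `0` in `K` and `U_i = K` for all
sufficiently large `i`. -/
def laurentBasic : Set (Set (LaurentSeries K)) :=
  {S | ∃ U : ℤ → Set K, (∀ i, IsOpen (U i) ∧ (0 : K) ∈ U i) ∧
    (∃ N : ℤ, ∀ i, N ≤ i → U i = Set.univ) ∧
    S = {f : LaurentSeries K | ∀ i, f.coeff i ∈ U i}}

/-- The higher topology on `K((t))`. -/
def laurentTop : TopologicalSpace (LaurentSeries K) := addTopologyOf (laurentBasic K)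

/-- `Λ = Σ_{i∈ℤ} 𝔭^{n_i} t^i ⊆ K((t))` for a sequence `(n_i) ⊆ ℤ ∪ {-∞}`. -/
def laurentLambda (q : ℕ) (n : ℤ → WithBot ℤ) : Set (LaurentSeries K) :=
  {f | ∀ i, f.coeff i ∈ pB K q (n i)}

/-- `B = Σ_{i∈ℤ} 𝔭^{k_i} t^i ⊆ K((t))` for a sequence `(k_i) ⊆ ℤ ∪ {∞}`. -/
def laurentPT (q : ℕ) (k : ℤ → WithTop ℤ) : Set (LaurentSeries K) :=
  {f | ∀ i, f.coeff i ∈ pT K q (k i)}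

/-- `A = Σ_{i∈ℤ} 𝔭^{k_i} t^i ⊆ K((t))` for a sequence `(k_i) ⊆ ℤ ∪ {±∞}`. -/
def laurentPE (q : ℕ) (k : ℤ → WithBot (WithTop ℤ)) : Set (LaurentSeries K) :=
  {f | ∀ i, f.coeff i ∈ pE K q (k i)}

/-- The admissible seminorm `‖Σ x_i t^i‖ = max_i ‖x_i‖ q^{n_i}` on `K((t))`. -/
def laurentSeminorm (q : ℕ) (n : ℤ → WithBot ℤ) (f : LaurentSeries K) : ℝ :=
  sSup {r : ℝ | ∃ i : ℤ, r = ‖f.coeff i‖ * qpow q (n i)}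

/-- The ring of integers `K[[t]] ⊆ K((t))`. -/
def laurentIntegers : Set (LaurentSeries K) := {f | ∀ i, i < 0 → f.coeff i = 0}

/-- The rank-two ring of integers `𝒪 + tK[[t]] ⊆ K((t))`. -/
def laurentRankTwo : Set (LaurentSeries K) :=
  {f | (∀ i, i < 0 → f.coeff i = 0) ∧ ‖f.coeff 0‖ ≤ 1}

/-- The pairing `γ(x)(y) = π₀(xy) = Σ_i x_i y_{-i}` on `K((t))`. -/
def laurentPairing (x y : LaurentSeries K) : K := ∑' i : ℤ, x.coeff i * y.coeff (-i)

/-! ### The mixed characteristic field `K{{t}}` -/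

/-- The underlying `K`-vector space of `K{{t}}`: functions `x : ℤ → K` (coefficients of
`Σ x_i t^i`) with `inf_i v_K(x_i) > -∞` (i.e. bounded norms) and `x_i → 0` as `i → -∞`. -/
def mixedCarrier : Submodule K (ℤ → K) where
  carrier := {x | (∃ C : ℝ, ∀ i, ‖x i‖ ≤ C) ∧ Filter.Tendsto x Filter.atBot (nhds (0 : K))}
  zero_mem' := ⟨⟨0, fun i => by simp⟩, tendsto_const_nhds⟩
  add_mem' := by
    rintro x y ⟨⟨C, hC⟩, hx⟩ ⟨⟨D, hD⟩, hy⟩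
    refine ⟨⟨C + D, fun i => (norm_add_le _ _).trans (add_le_add (hC i) (hD i))⟩, ?_⟩
    have h := hx.add hy
    rw [add_zero] at h
    exact h
  smul_mem' := by
    rintro c x ⟨⟨C, hC⟩, hx⟩
    refine ⟨⟨‖c‖ * C, fun i => ?_⟩, ?_⟩
    · have h : ‖(c • x) i‖ = ‖c‖ * ‖x i‖ := by simp [norm_smul]
      rw [h]
      exact mul_le_mul_of_nonneg_left (hC i) (norm_nonneg c)
    · have h := hx.const_smul c
      rw [smul_zero] at h
      exact h

/-- The field `K{{t}}`, as a `K`-vector space. -/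
abbrev Mt := ↥(mixedCarrier K)

/-- Basic neighbourhoods of zero for the higher topology on `K{{t}}`:
`Σ V_i t^i` where each `V_i` is an open neighbourhood of `0` in `K`, some `𝔭^c` is
contained in every `V_i`, and for every `l` eventually `𝔭^l ⊆ V_i`. -/
def mixedBasic (q : ℕ) : Set (Set (Mt K)) :=
  {S | ∃ Vs : ℤ → Set K, (∀ i, IsOpen (Vs i) ∧ (0 : K) ∈ Vs i) ∧
    (∃ c : ℤ, ∀ i, {x : K | ‖x‖ ≤ (q : ℝ) ^ (-c)} ⊆ Vs i) ∧
    (∀ l : ℤ, ∃ i0 : ℤ, ∀ i, i0 ≤ i → {x : K | ‖x‖ ≤ (q : ℝ) ^ (-l)} ⊆ Vs i) ∧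
    S = {f : Mt K | ∀ i, f.1 i ∈ Vs i}}

/-- The higher topology on `K{{t}}`. -/
def mixedTop (q : ℕ) : TopologicalSpace (Mt K) := addTopologyOf (mixedBasic K q)

/-- `Λ = Σ_{i∈ℤ} 𝔭^{n_i} t^i ⊆ K{{t}}` for a sequence `(n_i) ⊆ ℤ ∪ {-∞}`. -/
def mixedLambda (q : ℕ) (n : ℤ → WithBot ℤ) : Set (Mt K) :=
  {f | ∀ i, f.1 i ∈ pB K q (n i)}

/-- `B = Σ_{i∈ℤ} 𝔭^{k_i} t^i ⊆ K{{t}}` for a sequence `(k_i) ⊆ ℤ ∪ {∞}`. -/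
def mixedPT (q : ℕ) (k : ℤ → WithTop ℤ) : Set (Mt K) :=
  {f | ∀ i, f.1 i ∈ pT K q (k i)}

/-- `A = Σ_{i∈ℤ} 𝔭^{k_i} t^i ⊆ K{{t}}` for a sequence `(k_i) ⊆ ℤ ∪ {±∞}`. -/
def mixedPE (q : ℕ) (k : ℤ → WithBot (WithTop ℤ)) : Set (Mt K) :=
  {f | ∀ i, f.1 i ∈ pE K q (k i)}

/-- The admissible seminorm `‖Σ x_i t^i‖ = sup_i ‖x_i‖ q^{n_i}` on `K{{t}}`. -/
def mixedSeminorm (q : ℕ) (n : ℤ → WithBot ℤ) (f : Mt K) : ℝ :=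
  sSup {r : ℝ | ∃ i : ℤ, r = ‖f.1 i‖ * qpow q (n i)}

/-- The ring of integers `𝒪{{t}} ⊆ K{{t}}`. -/
def mixedIntegers : Set (Mt K) := {f | ∀ i, ‖f.1 i‖ ≤ 1}

/-- The rank-two ring of integers `Σ_{i<0} 𝔭 t^i + Σ_{i≥0} 𝒪 t^i ⊆ K{{t}}`. -/
def mixedRankTwo (q : ℕ) : Set (Mt K) :=
  {f | (∀ i : ℤ, i < 0 → ‖f.1 i‖ ≤ ((q : ℝ))⁻¹) ∧ ∀ i : ℤ, 0 ≤ i → ‖f.1 i‖ ≤ 1}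

/-- The monomial `t^i ∈ K{{t}}`. -/
def mixedT (i : ℤ) : Mt K :=
  ⟨fun j => if j = i then 1 else 0,
    ⟨⟨1, fun j => by by_cases h : j = i <;> simp [h]⟩, by
      refine (tendsto_const_nhds : Filter.Tendsto (fun _ : ℤ => (0 : K))
        Filter.atBot (nhds 0)).congr' ?_
      filter_upwards [Filter.eventually_le_atBot (i - 1)] with j hj
      have h : j ≠ i := by omega
      simp [h]⟩⟩

/-- Coefficients of the product of two elements of `K{{t}}` (Cauchy product). -/
def mixedMulCoeff (x y : Mt K) : ℤ → K := fun k => ∑' i : ℤ, x.1 i * y.1 (k - i)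

/-- Multiplication on `K{{t}}`. -/
def mixedMul (x y : Mt K) : Mt K :=
  if h : mixedMulCoeff K x y ∈ mixedCarrier K then ⟨_, h⟩ else 0

/-- The pairing `γ(x)(y) = π₀(xy) = Σ_i x_i y_{-i}` on `K{{t}}`. -/
def mixedPairing (x y : Mt K) : K := ∑' i : ℤ, x.1 i * y.1 (-i)



/-!
The sets `Λ_n = Σ 𝔭^{n_i} t^i` are `𝒪`-submodules, and absorbing because a Laurent series has
only finitely many coefficients below the index past which `n_i = -∞`. They are cofinal among
the basic neighbourhoods `Σ U_i t^i`, since every `U_i` contains some `𝔭^m`, and conversely they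
are basic neighbourhoods, since `𝔭^m` is open in the ultrametric field `K`. Finally
`c Λ_{n+e} ⊆ Λ_n` whenever `‖c‖ ≤ q^e`. So the `Λ_n` form a module filter basis of lattices
whose topology is the higher topology, and such a topology is locally convex.
-/

section Lattices

variable {K} {V : Type} [AddCommGroup V] [Module K V]

lemma IsLatticeSet.eventually_smul_mem {Λ : Set V} (hΛ : IsLatticeSet K Λ) (v : V) :
    ∀ᶠ a in 𝓝 (0 : K), a • v ∈ Λ := by
  obtain ⟨b, hb0, hbv⟩ := hΛ.2 v
  filter_upwards [Metric.closedBall_mem_nhds (0 : K) (norm_pos_iff.2 hb0)] with a ha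
  rw [Metric.mem_closedBall, dist_zero_right] at ha
  have hab : ‖a * b⁻¹‖ ≤ 1 := by
    rw [norm_mul, norm_inv]
    exact mul_inv_le_one_of_le₀ ha (norm_nonneg b)
  simpa [smul_smul, mul_assoc, hb0] using hΛ.1.2.2 _ hab _ hbv

lemma IsOSubmodule.isLatticeSet {Λ : Set V} (hΛ : IsOSubmodule K Λ)
    (habs : ∀ v : V, ∀ᶠ a in 𝓝 (0 : K), a • v ∈ Λ) : IsLatticeSet K Λ := by
  refine ⟨hΛ, fun v => ?_⟩
  have habs' : ∀ᶠ a in 𝓝[≠] (0 : K), a • v ∈ Λ := nhdsWithin_le_nhds (habs v)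
  obtain ⟨a, hav, ha0⟩ := (habs'.and self_mem_nhdsWithin).exists
  exact ⟨a, ha0, hav⟩

def _root_.ModuleFilterBasis.ofLattices (B : Set (Set V)) (hne : B.Nonempty)
    (hdir : ∀ U ∈ B, ∀ W ∈ B, ∃ Z ∈ B, Z ⊆ U ∩ W) (hlat : ∀ U ∈ B, IsLatticeSet K U)
    (hscale : ∀ a : K, ∀ U ∈ B, ∃ W ∈ B, a • W ⊆ U) : ModuleFilterBasis K V where
  sets := B
  nonempty := hne
  inter_sets hU hW := hdir _ hU _ hW
  zero' hU := (hlat _ hU).1.1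
  add' {U} hU := ⟨U, hU, by
    rintro _ ⟨x, hx, y, hy, rfl⟩
    exact (hlat U hU).1.2.1 x hx y hy⟩
  neg' {U} hU := ⟨U, hU, fun x hx => by
    simpa using (hlat U hU).1.2.2 (-1) (by simp) x hx⟩
  conj' _ {U} hU := ⟨U, hU, by simp⟩
  smul' {U} hU := ⟨Metric.closedBall 0 1, Metric.closedBall_mem_nhds _ one_pos, U, hU, by
    rintro _ ⟨a, ha, x, hx, rfl⟩
    rw [Metric.mem_closedBall, dist_zero_right] at ha
    exact (hlat U hU).1.2.2 a ha x hx⟩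
  smul_left' a {U} hU := by
    obtain ⟨W, hW, hWU⟩ := hscale a U hU
    exact ⟨W, hW, fun x hx => hWU (smul_mem_smul_set hx)⟩
  smul_right' v {U} hU := (hlat U hU).eventually_smul_mem v

theorem _root_.ModuleFilterBasis.isLCTVS_topology (B : ModuleFilterBasis K V)
    (hB : ∀ U ∈ B, IsLatticeSet K U) : IsLCTVS K B.topology := by
  refine ⟨B.toAddGroupFilterBasis.isTopologicalAddGroup, B.continuousSMul, fun S hS => ?_⟩
  obtain ⟨U, hU, hUS⟩ := B.toAddGroupFilterBasis.nhds_zero_hasBasis.mem_iff.1 hS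
  exact ⟨U, hB U hU, B.toAddGroupFilterBasis.mem_nhds_zero hU, hUS⟩

end Lattices

lemma addTopologyOf_eq_topology {W : Type} [AddCommGroup W] {B : Set (Set W)}
    (G : AddGroupFilterBasis W) (h : ⨅ U ∈ B, 𝓟 U = G.filter) :
    addTopologyOf B = G.topology := by
  rw [addTopologyOf, h]
  rfl

section FractionalIdeals

variable {K} {q : ℕ}

lemma IsCharZeroLocalField.isUltrametricDist (hK : IsCharZeroLocalField K q) :
    IsUltrametricDist K :=
  IsUltrametricDist.isUltrametricDist_of_forall_norm_add_le_max_norm hK.nonarch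

lemma IsCharZeroLocalField.one_lt_q_real (hK : IsCharZeroLocalField K q) : (1 : ℝ) < q := by
  exact_mod_cast hK.one_lt_q

lemma IsCharZeroLocalField.q_real_pos (hK : IsCharZeroLocalField K q) : (0 : ℝ) < q :=
  zero_lt_one.trans hK.one_lt_q_real

@[simp]
lemma pB_bot : pB K q ⊥ = univ := rfl

lemma pB_coe (m : ℤ) : pB K q m = Metric.closedBall (0 : K) ((q : ℝ) ^ (-m)) := by
  ext x
  rw [Metric.mem_closedBall, dist_zero_right]
  rfl

lemma pB_antitone (hK : IsCharZeroLocalField K q) : Antitone (pB K q) := by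
  intro a b hab
  induction a using WithBot.recBotCoe with
  | bot => simp
  | coe m =>
    induction b using WithBot.recBotCoe with
    | bot => exact absurd hab (by simp)
    | coe m' =>
      rw [pB_coe, pB_coe]
      exact Metric.closedBall_subset_closedBall <|
        zpow_le_zpow_right₀ hK.one_lt_q_real.le (neg_le_neg (WithBot.coe_le_coe.1 hab))

lemma zero_mem_pB (n : WithBot ℤ) : (0 : K) ∈ pB K q n := by
  induction n using WithBot.recBotCoe with
  | bot => trivial
  | coe m => rw [pB_coe]; exact Metric.mem_closedBall_self (by positivity)

lemma add_mem_pB (hK : IsCharZeroLocalField K q) {n : WithBot ℤ} {x y : K}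
    (hx : x ∈ pB K q n) (hy : y ∈ pB K q n) : x + y ∈ pB K q n := by
  induction n using WithBot.recBotCoe with
  | bot => trivial
  | coe m => exact (hK.nonarch x y).trans (max_le hx hy)

lemma mul_mem_pB_of_mem_pB_add (hK : IsCharZeroLocalField K q) {n : WithBot ℤ} {e : ℤ}
    {c x : K} (hc : ‖c‖ ≤ (q : ℝ) ^ e) (hx : x ∈ pB K q (n + e)) : c * x ∈ pB K q n := by
  induction n using WithBot.recBotCoe with
  | bot => trivial
  | coe m =>
    rw [← WithBot.coe_add, pB_coe, Metric.mem_closedBall, dist_zero_right] at hx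
    rw [pB_coe, Metric.mem_closedBall, dist_zero_right, norm_mul]
    calc ‖c‖ * ‖x‖ ≤ (q : ℝ) ^ e * (q : ℝ) ^ (-(m + e)) :=
          mul_le_mul hc hx (norm_nonneg x) (hc.trans' (norm_nonneg c))
      _ = (q : ℝ) ^ (-m) := by
          rw [← zpow_add₀ hK.q_real_pos.ne']; congr 1; ring

lemma mul_mem_pB (hK : IsCharZeroLocalField K q) {n : WithBot ℤ} {c x : K} (hc : ‖c‖ ≤ 1)
    (hx : x ∈ pB K q n) : c * x ∈ pB K q n :=
  mul_mem_pB_of_mem_pB_add hK (e := 0) (by simpa using hc) (by simpa using hx)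

lemma isOpen_pB (hK : IsCharZeroLocalField K q) (n : WithBot ℤ) : IsOpen (pB K q n) := by
  have := hK.isUltrametricDist
  induction n using WithBot.recBotCoe with
  | bot => exact isOpen_univ
  | coe m =>
    rw [pB_coe]
    exact IsUltrametricDist.isOpen_closedBall _ (zpow_pos hK.q_real_pos _).ne'

lemma pB_mem_nhds_zero (hK : IsCharZeroLocalField K q) (n : WithBot ℤ) :
    pB K q n ∈ 𝓝 (0 : K) :=
  (isOpen_pB hK n).mem_nhds (zero_mem_pB n)

lemma exists_pB_subset (hK : IsCharZeroLocalField K q) {U : Set K} (hU : U ∈ 𝓝 (0 : K)) :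
    ∃ m : ℤ, pB K q m ⊆ U := by
  obtain ⟨ε, hε, hball⟩ := Metric.mem_nhds_iff.1 hU
  obtain ⟨m, hm⟩ := exists_pow_lt_of_lt_one hε (inv_lt_one_of_one_lt₀ hK.one_lt_q_real)
  refine ⟨m, (pB_coe m).trans_subset ((Metric.closedBall_subset_ball ?_).trans hball)⟩
  rwa [zpow_neg, zpow_natCast, ← inv_pow]

end FractionalIdeals

section Laurent

variable {K} {q : ℕ}

def EventuallyBot (n : ℤ → WithBot ℤ) : Prop := ∃ k : ℤ, ∀ i : ℤ, k < i → n i = ⊥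

lemma EventuallyBot.sup {n n' : ℤ → WithBot ℤ} (hn : EventuallyBot n) (hn' : EventuallyBot n') :
    EventuallyBot (n ⊔ n') := by
  obtain ⟨k, hk⟩ := hn
  obtain ⟨k', hk'⟩ := hn'
  refine ⟨max k k', fun i hi => ?_⟩
  rw [max_lt_iff] at hi
  simp [hk i hi.1, hk' i hi.2]

lemma EventuallyBot.add_const {n : ℤ → WithBot ℤ} (hn : EventuallyBot n) (e : ℤ) :
    EventuallyBot (fun i => n i + e) := by
  obtain ⟨k, hk⟩ := hn
  exact ⟨k, fun i hi => by simp [hk i hi]⟩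

lemma isOSubmodule_laurentLambda (hK : IsCharZeroLocalField K q) (n : ℤ → WithBot ℤ) :
    IsOSubmodule K (laurentLambda K q n) :=
  ⟨fun i => zero_mem_pB (n i),
    fun _ hf _ hg i => add_mem_pB hK (hf i) (hg i),
    fun _ hc _ hf i => mul_mem_pB hK hc (hf i)⟩

lemma eventually_smul_mem_laurentLambda (hK : IsCharZeroLocalField K q) {n : ℤ → WithBot ℤ}
    (hn : EventuallyBot n) (f : LaurentSeries K) :
    ∀ᶠ a in 𝓝 (0 : K), a • f ∈ laurentLambda K q n := by
  obtain ⟨k, hk⟩ := hn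
  have hfin : ∀ᶠ a in 𝓝 (0 : K), ∀ i ∈ Finset.Icc f.order k, a * f.coeff i ∈ pB K q (n i) :=
    (Filter.eventually_all_finset _).2 fun i _ =>
      ((continuous_mul_const (f.coeff i)).tendsto' 0 0 (zero_mul _)).eventually
        (pB_mem_nhds_zero hK (n i))
  filter_upwards [hfin] with a ha i
  rw [HahnSeries.coeff_smul, smul_eq_mul]
  rcases lt_or_ge k i with hki | hik
  · rw [hk i hki]
    trivial
  rcases lt_or_ge i f.order with hio | hoi
  · rw [HahnSeries.coeff_eq_zero_of_lt_order hio, mul_zero]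
    exact zero_mem_pB _
  · exact ha i (Finset.mem_Icc.2 ⟨hoi, hik⟩)

lemma isLatticeSet_laurentLambda (hK : IsCharZeroLocalField K q) {n : ℤ → WithBot ℤ}
    (hn : EventuallyBot n) : IsLatticeSet K (laurentLambda K q n) :=
  (isOSubmodule_laurentLambda hK n).isLatticeSet (eventually_smul_mem_laurentLambda hK hn)

lemma laurentLambda_sup_subset (hK : IsCharZeroLocalField K q) (n n' : ℤ → WithBot ℤ) :
    laurentLambda K q (n ⊔ n') ⊆ laurentLambda K q n ∩ laurentLambda K q n' :=
  fun _ hf => ⟨fun i => pB_antitone hK le_sup_left (hf i),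
    fun i => pB_antitone hK le_sup_right (hf i)⟩

lemma smul_laurentLambda_add_subset (hK : IsCharZeroLocalField K q) (n : ℤ → WithBot ℤ)
    {c : K} {e : ℤ} (hc : ‖c‖ ≤ (q : ℝ) ^ e) :
    c • laurentLambda K q (fun i => n i + e) ⊆ laurentLambda K q n := by
  rintro _ ⟨f, hf, rfl⟩ i
  rw [HahnSeries.coeff_smul, smul_eq_mul]
  exact mul_mem_pB_of_mem_pB_add hK hc (hf i)

lemma laurentLambda_mem_laurentBasic (hK : IsCharZeroLocalField K q) {n : ℤ → WithBot ℤ}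
    (hn : EventuallyBot n) : laurentLambda K q n ∈ laurentBasic K := by
  obtain ⟨k, hk⟩ := hn
  refine ⟨fun i => pB K q (n i), fun i => ⟨isOpen_pB hK _, zero_mem_pB _⟩,
    ⟨k + 1, fun i hi => ?_⟩, rfl⟩
  simp [hk i (by omega)]

lemma exists_laurentLambda_subset (hK : IsCharZeroLocalField K q) {S : Set (LaurentSeries K)}
    (hS : S ∈ laurentBasic K) :
    ∃ n : ℤ → WithBot ℤ, EventuallyBot n ∧ laurentLambda K q n ⊆ S := by
  obtain ⟨U, hU, ⟨N, hN⟩, rfl⟩ := hS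
  choose m hm using fun i => exists_pB_subset hK ((hU i).1.mem_nhds (hU i).2)
  refine ⟨fun i => if N ≤ i then ⊥ else m i, ⟨N, fun i hi => if_pos hi.le⟩, fun f hf i => ?_⟩
  by_cases hi : N ≤ i
  · rw [hN i hi]
    trivial
  · exact hm i (by simpa [hi] using hf i)

def laurentLatticeBasis (hK : IsCharZeroLocalField K q) : ModuleFilterBasis K (LaurentSeries K) :=
  .ofLattices {Λ | ∃ n, EventuallyBot n ∧ laurentLambda K q n = Λ}
    ⟨_, ⊥, ⟨0, fun _ _ => rfl⟩, rfl⟩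
    (by
      rintro _ ⟨n, hn, rfl⟩ _ ⟨n', hn', rfl⟩
      exact ⟨_, ⟨n ⊔ n', hn.sup hn', rfl⟩, laurentLambda_sup_subset hK n n'⟩)
    (by
      rintro _ ⟨n, hn, rfl⟩
      exact isLatticeSet_laurentLambda hK hn)
    (by
      rintro c _ ⟨n, hn, rfl⟩
      obtain ⟨e, he⟩ := pow_unbounded_of_one_lt ‖c‖ hK.one_lt_q_real
      refine ⟨_, ⟨_, hn.add_const e, rfl⟩, smul_laurentLambda_add_subset hK n ?_⟩
      exact_mod_cast he.le)

lemma mem_laurentLatticeBasis (hK : IsCharZeroLocalField K q) {Λ : Set (LaurentSeries K)} :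
    Λ ∈ laurentLatticeBasis hK ↔ ∃ n, EventuallyBot n ∧ laurentLambda K q n = Λ := by
  rfl

lemma laurentTop_eq (hK : IsCharZeroLocalField K q) :
    laurentTop K = (laurentLatticeBasis hK).topology := by
  refine addTopologyOf_eq_topology _ (le_antisymm (fun S hS => ?_) ?_)
  · obtain ⟨_, hΛ, hsub⟩ := (FilterBasis.mem_filter_iff _).1 hS
    obtain ⟨n, hn, rfl⟩ := (mem_laurentLatticeBasis hK).1 hΛ
    exact mem_of_superset (mem_iInf_of_mem _ <|
      mem_iInf_of_mem (laurentLambda_mem_laurentBasic hK hn) (mem_principal_self _)) hsub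
  · refine le_iInf₂ fun U hU => le_principal_iff.2 ((FilterBasis.mem_filter_iff _).2 ?_)
    obtain ⟨n, hn, hsub⟩ := exists_laurentLambda_subset hK hU
    exact ⟨_, (mem_laurentLatticeBasis hK).2 ⟨n, hn, rfl⟩, hsub⟩

theorem isLCTVS_laurentTop (hK : IsCharZeroLocalField K q) : IsLCTVS K (laurentTop K) := by
  rw [laurentTop_eq hK]
  refine (laurentLatticeBasis hK).isLCTVS_topology fun _ hΛ => ?_
  obtain ⟨n, hn, rfl⟩ := (mem_laurentLatticeBasis hK).1 hΛ
  exact isLatticeSet_laurentLambda hK hn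

theorem mem_nhds_zero_laurentTop_iff (hK : IsCharZeroLocalField K q) {S : Set (LaurentSeries K)} :
    S ∈ @nhds _ (laurentTop K) 0 ↔ ∃ n, EventuallyBot n ∧ laurentLambda K q n ⊆ S := by
  rw [laurentTop_eq hK, (laurentLatticeBasis hK).toAddGroupFilterBasis.nhds_zero_hasBasis.mem_iff]
  constructor
  · rintro ⟨_, hΛ, hsub⟩
    obtain ⟨n, hn, rfl⟩ := (mem_laurentLatticeBasis hK).1 hΛ
    exact ⟨n, hn, hsub⟩
  · rintro ⟨n, hn, hsub⟩
    exact ⟨_, (mem_laurentLatticeBasis hK).2 ⟨n, hn, rfl⟩, hsub⟩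

end Laurent

/-- The higher topology makes `K((t))` into a locally convex topological
`K`-vector space: every set `Λ = Σ_{i∈ℤ} 𝔭^{n_i} t^i`, where `(n_i) ⊆ ℤ ∪ {-∞}` satisfies
`n_i = -∞` for all sufficiently large `i`, is an `𝒪`-lattice in `K((t))`, and these sets form
a basis of neighbourhoods of zero for the higher topology. -/
theorem statement0 (q : ℕ) (hK : IsCharZeroLocalField K q) :
    IsLCTVS K (laurentTop K) ∧
    (∀ n : ℤ → WithBot ℤ, (∃ k : ℤ, ∀ i : ℤ, k < i → n i = ⊥) →
      IsLatticeSet K (laurentLambda K q n)) ∧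
    (∀ S : Set (LaurentSeries K),
      S ∈ @nhds _ (laurentTop K) 0 ↔
        ∃ n : ℤ → WithBot ℤ, (∃ k : ℤ, ∀ i : ℤ, k < i → n i = ⊥) ∧
          laurentLambda K q n ⊆ S) :=
  ⟨isLCTVS_laurentTop hK, fun _ hn => isLatticeSet_laurentLambda hK hn,
    fun _ => mem_nhds_zero_laurentTop_iff hK⟩

end TwoDimLF
end
end

section
/- Let B = Σ_{i∈ℤ} 𝔭^{k_i} t^i be a basic bounded 𝒪-submodule of K{{t}}, where (k_i)_{i∈ℤ} ⊂ ℤ ∪ {∞} is bounded below. Then B is compactoid for the higher topology if and only if k_i → ∞ as i → -∞. -/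
/-!
Common setting: `K` is a characteristic-zero local field (a finite extension of `ℚ_p`)
with ring of integers `𝒪 = {c : K | ‖c‖ ≤ 1}`, maximal ideal `𝔭 = {c : K | ‖c‖ < 1}`,
residue field of cardinality `q` and the absolute value normalised by `‖π‖ = q⁻¹`.
We formalise the two-dimensional local fields `K((t))` (as `LaurentSeries K`) and
`K{{t}}` (as the submodule `mixedCarrier K` of `ℤ → K`), their higher topologies, and
the relevant functional-analytic notions (lattices, seminorms, boundedness,
c-compactness, compactoidness, completeness for nets, duality).
-/

open Filter Topology Set Pointwise
open scoped Classical

noncomputable section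

namespace TwoDimLF

variable (K : Type) [NontriviallyNormedField K]

/-!
An open lattice of `K{{t}}` contains a basic neighbourhood `Σ V_i t^i`, with `𝔭^c ⊆ V_i` for all
`i` and `𝔭^d ⊆ V_i` for large `i`. If `k_i ≥ c` for `i ≪ 0` and `k_i ≥ d` everywhere, every
element of `B` lies in this neighbourhood up to finitely many monomials `x_i t^i`, which are
covered by `𝒪 a t^i` for a fixed `a` with `‖a‖ ≥ q^(-d)`. Conversely, finitely many vectors
have coefficients tending to `0` as `i → -∞`, so modulo an open lattice that is `𝔭^m` in
negative degrees they cannot produce the monomials `π^(k_i) t^i` with `k_i < m` and `i`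
arbitrarily negative.
-/

variable {K}

section AddTopology

variable {W : Type} [AddCommGroup W] {B : Set (Set W)}

theorem isOpen_addTopologyOf {U : Set W} (hU : U ∈ B) (hadd : ∀ a ∈ U, ∀ v ∈ U, a + v ∈ U) :
    IsOpen[addTopologyOf B] U := fun a ha =>
  Filter.mem_map.2 <| Filter.mem_of_superset
    (mem_iInf_of_mem U (mem_iInf_of_mem hU (mem_principal_self U))) fun v hv => hadd a ha v hv

theorem exists_mem_subset_of_isOpen_addTopologyOf (hne : B.Nonempty)
    (hdir : ∀ U ∈ B, ∀ V ∈ B, ∃ S ∈ B, S ⊆ U ∩ V) {Λ : Set W} (h0 : (0 : W) ∈ Λ)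
    (hΛ : IsOpen[addTopologyOf B] Λ) : ∃ U ∈ B, U ⊆ Λ := by
  have h : Λ ∈ ⨅ U ∈ B, 𝓟 U := by simpa using hΛ 0 h0
  have hdir' : DirectedOn ((fun U => 𝓟 U) ⁻¹'o (· ≥ ·)) B := fun U hU V hV =>
    let ⟨S, hS, hSUV⟩ := hdir U hU V hV
    ⟨S, hS, principal_mono.2 (hSUV.trans inter_subset_left),
      principal_mono.2 (hSUV.trans inter_subset_right)⟩
  simpa using (Filter.mem_biInf_of_directed hdir' hne).1 h

end AddTopology

section Compactoid

variable {V : Type} [AddCommGroup V] [Module K V]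

theorem isCompactoid_of_fintype_cover {τ : TopologicalSpace V} {A : Set V}
    (h : ∀ Λ : Set V, IsLatticeSet K Λ → IsOpen[τ] Λ →
      ∃ (ι : Type) (_ : Fintype ι) (v : ι → V),
        A ⊆ {u : V | ∃ l ∈ Λ, ∃ c : ι → K, (∀ j, ‖c j‖ ≤ 1) ∧ u = l + ∑ j, c j • v j}) :
    IsCompactoid K τ A := by
  intro Λ hΛ hopen
  obtain ⟨ι, _, v, hA⟩ := h Λ hΛ hopen
  let e := Fintype.equivFin ι
  refine ⟨Fintype.card ι, v ∘ e.symm, fun u hu => ?_⟩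
  obtain ⟨l, hl, c, hc, rfl⟩ := hA hu
  exact ⟨l, hl, c ∘ e.symm, fun j => hc _, by
    rw [← e.symm.sum_comp (fun j => c j • v j)]; rfl⟩

end Compactoid

theorem norm_le_of_mem_pT {q : ℕ} (hq : 1 ≤ (q : ℝ)) {n : WithTop ℤ} {m : ℤ}
    (hmn : (m : WithTop ℤ) ≤ n) {x : K} (hx : x ∈ pT K q n) : ‖x‖ ≤ (q : ℝ) ^ (-m) := by
  induction n using WithTop.recTopCoe with
  | top =>
    rw [show x = 0 from hx, norm_zero]
    positivity
  | coe a =>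
    have hx : ‖x‖ ≤ (q : ℝ) ^ (-a) := hx
    exact hx.trans (zpow_le_zpow_right₀ hq (neg_le_neg (WithTop.coe_le_coe.1 hmn)))

theorem zero_mem_pT (q : ℕ) (n : WithTop ℤ) : (0 : K) ∈ pT K q n := by
  induction n using WithTop.recTopCoe with
  | top => rfl
  | coe a =>
    show ‖(0 : K)‖ ≤ _
    rw [norm_zero]
    positivity

theorem mixedT_apply (i j : ℤ) : (mixedT K i).1 j = if j = i then 1 else 0 := rfl

theorem sum_smul_mixedT_apply (s : Finset ℤ) (c : ℤ → K) (i : ℤ) :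
    (∑ j ∈ s, c j • mixedT K j).1 i = if i ∈ s then c i else 0 := by
  simp [Finset.sum_apply, mixedT_apply]

theorem smul_mixedT_mem_mixedPT {q : ℕ} {k : ℤ → WithTop ℤ} {i : ℤ} {x : K}
    (hx : x ∈ pT K q (k i)) : x • mixedT K i ∈ mixedPT K q k := by
  intro j
  by_cases hji : j = i
  · subst hji
    simpa [mixedT_apply] using hx
  · simpa [mixedT_apply, hji] using zero_mem_pT q (k j)

theorem setOf_norm_le_zpow_subset {q : ℕ} (hq : 1 ≤ (q : ℝ)) {a b : ℤ} (hab : a ≤ b) :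
    {x : K | ‖x‖ ≤ (q : ℝ) ^ (-b)} ⊆ {x : K | ‖x‖ ≤ (q : ℝ) ^ (-a)} :=
  fun _ hx => le_trans hx (zpow_le_zpow_right₀ hq (neg_le_neg hab))

theorem univ_mem_mixedBasic (q : ℕ) : (univ : Set (Mt K)) ∈ mixedBasic K q :=
  ⟨fun _ => univ, fun _ => ⟨isOpen_univ, trivial⟩, ⟨0, fun _ => subset_univ _⟩,
    fun _ => ⟨0, fun _ _ => subset_univ _⟩, by simp⟩

theorem inter_mem_mixedBasic {q : ℕ} (hq : 1 ≤ (q : ℝ)) {U V : Set (Mt K)}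
    (hU : U ∈ mixedBasic K q) (hV : V ∈ mixedBasic K q) : U ∩ V ∈ mixedBasic K q := by
  obtain ⟨Us, hUs, ⟨c₁, hc₁⟩, hUl, rfl⟩ := hU
  obtain ⟨Vs, hVs, ⟨c₂, hc₂⟩, hVl, rfl⟩ := hV
  refine ⟨fun i => Us i ∩ Vs i, fun i => ⟨(hUs i).1.inter (hVs i).1, (hUs i).2, (hVs i).2⟩,
    ⟨max c₁ c₂, fun i =>
      subset_inter ((setOf_norm_le_zpow_subset hq (le_max_left _ _)).trans (hc₁ i))
        ((setOf_norm_le_zpow_subset hq (le_max_right _ _)).trans (hc₂ i))⟩,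
    fun l => ?_, ?_⟩
  · obtain ⟨a₁, ha₁⟩ := hUl l
    obtain ⟨a₂, ha₂⟩ := hVl l
    exact ⟨max a₁ a₂, fun i hi => subset_inter (ha₁ i ((le_max_left _ _).trans hi))
      (ha₂ i ((le_max_right _ _).trans hi))⟩
  · ext f
    exact forall_and.symm

theorem exists_mixedBasic_subset_of_isOpen {q : ℕ} (hq : 1 ≤ (q : ℝ)) {Λ : Set (Mt K)}
    (h0 : (0 : Mt K) ∈ Λ) (hΛ : IsOpen[mixedTop K q] Λ) : ∃ U ∈ mixedBasic K q, U ⊆ Λ :=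
  exists_mem_subset_of_isOpen_addTopologyOf ⟨univ, univ_mem_mixedBasic q⟩
    (fun _ hU _ hV => ⟨_, inter_mem_mixedBasic hq hU hV, subset_rfl⟩) h0 hΛ

theorem eventually_norm_coeff_le_atBot {ι : Type} [Finite ι] (v : ι → Mt K) {r : ℝ}
    (hr : 0 < r) : ∀ᶠ i in atBot, ∀ j, ‖(v j).1 i‖ ≤ r :=
  eventually_all.2 fun j => ((v j).2.2.eventually (Metric.closedBall_mem_nhds 0 hr)).mono
    fun _ hi => by simpa only [Metric.mem_closedBall, dist_zero_right] using hi

section Ultrametric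

variable [IsUltrametricDist K] {q : ℕ}

theorem isLatticeSet_mixedLambda (hq : 1 ≤ (q : ℝ)) {n : ℤ → ℤ} (hn : BddAbove (range n)) :
    IsLatticeSet K (mixedLambda K q fun i => (n i : WithBot ℤ)) := by
  obtain ⟨c, hc⟩ := hn
  have hbound : ∀ i, (q : ℝ) ^ (-c) ≤ (q : ℝ) ^ (-n i) :=
    fun i => zpow_le_zpow_right₀ hq (neg_le_neg (hc ⟨i, rfl⟩))
  refine ⟨⟨fun i => ?_, fun f hf g hg i => ?_, fun a ha f hf i => ?_⟩, fun v => ?_⟩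
  · show ‖(0 : K)‖ ≤ _
    rw [norm_zero]
    positivity
  · exact (IsUltrametricDist.norm_add_le_max _ _).trans (max_le (hf i) (hg i))
  · show ‖a * f.1 i‖ ≤ _
    rw [norm_mul]
    exact (mul_le_of_le_one_left (norm_nonneg _) ha).trans (hf i)
  · obtain ⟨C, hC⟩ := v.2.1
    have hC' : 0 < |C| + 1 := by positivity
    obtain ⟨a, ha0, ha⟩ := NormedField.exists_norm_lt K
      (div_pos (zpow_pos (by linarith : (0 : ℝ) < q) (-c)) hC')
    refine ⟨a, norm_pos_iff.1 ha0, fun i => ?_⟩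
    show ‖a * v.1 i‖ ≤ _
    rw [norm_mul]
    calc ‖a‖ * ‖v.1 i‖ ≤ ‖a‖ * (|C| + 1) :=
          mul_le_mul_of_nonneg_left ((hC i).trans (by linarith [le_abs_self C])) ha0.le
      _ ≤ (q : ℝ) ^ (-c) := (lt_div_iff₀ hC').1 ha |>.le
      _ ≤ _ := hbound i

theorem mixedLambda_mem_mixedBasic (hq : 1 ≤ (q : ℝ)) {n : ℤ → ℤ} (hn : BddAbove (range n))
    (htend : Tendsto n atTop atBot) :
    (mixedLambda K q fun i => (n i : WithBot ℤ)) ∈ mixedBasic K q := by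
  obtain ⟨c, hc⟩ := hn
  refine ⟨fun i => {x : K | ‖x‖ ≤ (q : ℝ) ^ (-n i)}, fun i => ⟨?_, ?_⟩,
    ⟨c, fun i => setOf_norm_le_zpow_subset hq (hc ⟨i, rfl⟩)⟩,
    fun l => (eventually_atTop.1 (tendsto_atBot.1 htend l)).imp
      fun _ h i hi => setOf_norm_le_zpow_subset hq (h i hi),
    rfl⟩
  · simpa only [Metric.closedBall, dist_zero_right] using IsUltrametricDist.isOpen_closedBall
      (0 : K) (zpow_pos (by linarith : (0 : ℝ) < q) (-n i)).ne'
  · show ‖(0 : K)‖ ≤ _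
    rw [norm_zero]
    positivity

theorem isOpen_mixedLambda (hq : 1 ≤ (q : ℝ)) {n : ℤ → ℤ} (hn : BddAbove (range n))
    (htend : Tendsto n atTop atBot) :
    IsOpen[mixedTop K q] (mixedLambda K q fun i => (n i : WithBot ℤ)) :=
  isOpen_addTopologyOf (mixedLambda_mem_mixedBasic hq hn htend)
    (isLatticeSet_mixedLambda hq hn).1.2.1

theorem norm_coeff_add_sum_smul_le {ι : Type} [Fintype ι] {l : Mt K} {c : ι → K}
    {v : ι → Mt K} {i : ℤ} {r : ℝ} (hl : ‖l.1 i‖ ≤ r) (hc : ∀ j, ‖c j‖ ≤ 1)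
    (hv : ∀ j, ‖(v j).1 i‖ ≤ r) : ‖(l + ∑ j, c j • v j).1 i‖ ≤ r := by
  have hcoeff : (l + ∑ j, c j • v j).1 i = l.1 i + ∑ j, c j * (v j).1 i := by
    simp [Finset.sum_apply]
  rw [hcoeff]
  refine (IsUltrametricDist.norm_add_le_max _ _).trans (max_le hl ?_)
  refine IsUltrametricDist.norm_sum_le_of_forall_le_of_nonneg ((norm_nonneg _).trans hl)
    fun j _ => ?_
  rw [norm_mul]
  exact (mul_le_of_le_one_left (norm_nonneg _) (hc j)).trans (hv j)

theorem tail_of_isCompactoid_mixedPT (hq : 1 < (q : ℝ)) {π : K} (hπ : ‖π‖ = (q : ℝ)⁻¹)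
    {k : ℤ → WithTop ℤ} (hB : IsCompactoid K (mixedTop K q) (mixedPT K q k)) (m : ℤ) :
    ∃ i0 : ℤ, ∀ i : ℤ, i ≤ i0 → (m : WithTop ℤ) ≤ k i := by
  -- test `B` against the open lattice `Σ_{i < 0} 𝔭^m t^i + Σ_{i ≥ 0} 𝔭^(m - i) t^i`
  have hn : BddAbove (range fun i : ℤ => m - max i 0) :=
    ⟨m, by rintro _ ⟨i, rfl⟩; dsimp only; omega⟩
  have htend : Tendsto (fun i : ℤ => m - max i 0) atTop atBot :=
    tendsto_atTop_atBot.2 fun l => ⟨m - l, fun i hi => by omega⟩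
  obtain ⟨N, v, hcover⟩ :=
    hB _ (isLatticeSet_mixedLambda hq.le hn) (isOpen_mixedLambda hq.le hn htend)
  obtain ⟨i0, hi0⟩ := eventually_atBot.1 <| (eventually_le_atBot 0).and <|
    eventually_norm_coeff_le_atBot v (zpow_pos (by linarith : (0 : ℝ) < q) (-m))
  refine ⟨i0, fun i hi => ?_⟩
  obtain ⟨hi_nonpos, hv⟩ := hi0 i hi
  by_contra hlt
  obtain ⟨a, hka, ham⟩ := WithTop.lt_iff_exists_coe.1 (not_le.1 hlt)
  have hπa : ‖π ^ a‖ = (q : ℝ) ^ (-a) := by rw [norm_zpow, hπ, inv_zpow, ← zpow_neg]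
  have hmem : π ^ a • mixedT K i ∈ mixedPT K q k :=
    smul_mixedT_mem_mixedPT (by rw [hka]; exact hπa.le)
  obtain ⟨l, hl, c, hc, hx⟩ := hcover hmem
  have hl' : ‖l.1 i‖ ≤ (q : ℝ) ^ (-m) := by
    have hli := hl i
    simp only [max_eq_right hi_nonpos, sub_zero] at hli
    exact hli
  have hle := norm_coeff_add_sum_smul_le hl' hc hv
  rw [← hx] at hle
  simp only [Submodule.coe_smul, Pi.smul_apply, mixedT_apply, if_pos, smul_eq_mul, mul_one,
    hπa] at hle
  exact absurd hle (not_le.2 (zpow_lt_zpow_right₀ hq (neg_lt_neg (WithTop.coe_lt_coe.1 ham))))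

end Ultrametric

theorem isCompactoid_mixedPT_of_tail {q : ℕ} (hq : 1 ≤ (q : ℝ)) {k : ℤ → WithTop ℤ}
    (hk : ∃ d : ℤ, ∀ i, (d : WithTop ℤ) ≤ k i)
    (htail : ∀ m : ℤ, ∃ i0 : ℤ, ∀ i : ℤ, i ≤ i0 → (m : WithTop ℤ) ≤ k i) :
    IsCompactoid K (mixedTop K q) (mixedPT K q k) := by
  refine isCompactoid_of_fintype_cover fun Λ hΛ hopen => ?_
  obtain ⟨_, ⟨V, hV, ⟨c, hc⟩, hVl, rfl⟩, hUΛ⟩ :=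
    exists_mixedBasic_subset_of_isOpen hq hΛ.1.1 hopen
  obtain ⟨d, hd⟩ := hk
  obtain ⟨i1, hi1⟩ := hVl d
  obtain ⟨i0, hi0⟩ := htail c
  obtain ⟨a, ha⟩ := NormedField.exists_lt_norm K ((q : ℝ) ^ (-d))
  have ha0 : a ≠ 0 := norm_pos_iff.1 (lt_of_le_of_lt (by positivity) ha)
  let s := Finset.Ioo i0 i1
  refine ⟨s, inferInstance, fun j => a • mixedT K j, fun x hx =>
    ⟨x - ∑ j ∈ s, x.1 j • mixedT K j, hUΛ fun i => ?_, fun j => x.1 j / a, fun j => ?_, ?_⟩⟩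
  · have hcoeff : (x - ∑ j ∈ s, x.1 j • mixedT K j).1 i = if i ∈ s then 0 else x.1 i := by
      rw [Submodule.coe_sub, Pi.sub_apply, sum_smul_mixedT_apply]
      split_ifs <;> simp
    rw [hcoeff]
    split_ifs with his
    · exact (hV i).2
    · rcases not_and_or.1 (Finset.mem_Ioo.not.1 his) with hi | hi
      · exact hc i (norm_le_of_mem_pT hq (hi0 i (not_lt.1 hi)) (hx i))
      · exact hi1 i (not_lt.1 hi) (norm_le_of_mem_pT hq (hd i) (hx i))
  · rw [norm_div]
    exact div_le_one_of_le₀ ((norm_le_of_mem_pT hq (hd j) (hx j)).trans ha.le) (norm_nonneg _)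
  · simp only [smul_smul, div_mul_cancel₀ _ ha0]
    rw [Finset.sum_coe_sort s (fun j => x.1 j • mixedT K j), sub_add_cancel]

/-- Let `B = Σ_{i∈ℤ} 𝔭^{k_i} t^i` be a basic bounded `𝒪`-submodule of
`K{{t}}`, where `(k_i) ⊆ ℤ ∪ {∞}` is bounded below. Then `B` is compactoid for the higher
topology if and only if `k_i → ∞` as `i → -∞`. -/
theorem statement15 (q : ℕ) (hK : IsCharZeroLocalField K q)
    (k : ℤ → WithTop ℤ) (hk : ∃ d : ℤ, ∀ i : ℤ, (d : WithTop ℤ) ≤ k i) :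
    IsCompactoid K (mixedTop K q) (mixedPT K q k) ↔
      ∀ m : ℤ, ∃ i0 : ℤ, ∀ i : ℤ, i ≤ i0 → (m : WithTop ℤ) ≤ k i := by
  have := IsUltrametricDist.isUltrametricDist_of_forall_norm_add_le_max_norm hK.nonarch
  have hq : (1 : ℝ) < q := by exact_mod_cast hK.one_lt_q
  obtain ⟨π, hπ⟩ := hK.exists_uniformizer
  exact ⟨tail_of_isCompactoid_mixedPT hq hπ, isCompactoid_mixedPT_of_tail hq.le hk⟩

end TwoDimLF
end
end
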